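/- arXiv:2112.12570 — 2 statements merged into one kernel-verified Lean document; each statement's English description precedes it below -/
import Mathlib

section
/- Let 0 < p ≤ 1 ≤ s < ∞, p < s, λ > n(s/p - 1), and suppose M : R^n → C satisfies the molecule conditions (M1) and (M2) with respect to B = B(0, r). Let N ∈ N with N + 1 < λ/s - n/s'. Then ∫_{R^n} |M(x)| |x|^{N+1} dx ≤ C r^{N + 1 - n(1/p - 1)} for a constant C depending only on n, s, p, λ, N. -/
/-!
Split `ℝⁿ` into `B = B(0, r)` and its complement. On `B`, `|x| ^ (N + 1) ≤ r ^ (N + 1)`, and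
Hölder's inequality against (M1) gives `r ^ (N + 1) · r ^ (n (1/s - 1/p)) · |B| ^ (1/s')`.
On `Bᶜ`, write `|x| ^ (N + 1) = |x| ^ (λ/s) · |x| ^ (N + 1 - λ/s)` and apply Hölder against
(M2): the second factor lies in `L^{s'}(Bᶜ)` exactly because `s' (N + 1 - λ/s) < -n`, and by
homogeneity its norm is a constant times `r ^ (N + 1 - λ/s + n/s')` (for `s = 1` it is simply
bounded by `r ^ (N + 1 - λ)`). Both pieces are then constant multiples of
`r ^ (N + 1 - n (1/p - 1))`.
-/

open MeasureTheory Metric ENNReal Module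

theorem ENNReal.ofReal_rpow_add {r : ℝ} (hr : 0 < r) (a b : ℝ) :
    ENNReal.ofReal (r ^ (a + b)) = ENNReal.ofReal (r ^ a) * ENNReal.ofReal (r ^ b) := by
  rw [Real.rpow_add hr, ENNReal.ofReal_mul (by positivity)]

theorem lintegral_le_lintegral_rpow_mul_measure_univ {α : Type*} [MeasurableSpace α]
    (μ : Measure α) {f : α → ℝ≥0∞} (hf : AEMeasurable f μ) {s : ℝ} (hs : 1 ≤ s) :
    ∫⁻ x, f x ∂μ ≤ (∫⁻ x, f x ^ s ∂μ) ^ (1 / s) * μ Set.univ ^ (1 - 1 / s) := by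
  have h := eLpNorm_le_eLpNorm_mul_rpow_measure_univ (μ := μ)
    (show (1 : ℝ≥0∞) ≤ ENNReal.ofReal s by simpa using hs) hf.aestronglyMeasurable
  rwa [eLpNorm_one_eq_lintegral_enorm,
    eLpNorm_eq_lintegral_rpow_enorm_toReal (ENNReal.ofReal_pos.2 (by linarith)).ne' ofReal_ne_top,
    ENNReal.toReal_ofReal (by linarith), ENNReal.toReal_one, div_one] at h

section Normed

variable {E : Type*} [NormedAddCommGroup E] [MeasurableSpace E] [OpensMeasurableSpace E]
  (μ : Measure E)

theorem setLIntegral_ball_mul_rpow_norm_le (f : E → ℝ≥0∞) {r b : ℝ} (hb : 0 ≤ b) :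
    ∫⁻ x in ball 0 r, f x * ENNReal.ofReal (‖x‖ ^ b) ∂μ
      ≤ ENNReal.ofReal (r ^ b) * ∫⁻ x in ball 0 r, f x ∂μ := by
  rw [← lintegral_const_mul' _ _ ofReal_ne_top]
  refine setLIntegral_mono' measurableSet_ball fun x hx => ?_
  rw [mul_comm]
  gcongr
  exact (mem_ball_zero_iff.1 hx).le

theorem setLIntegral_compl_ball_mul_rpow_norm_le (f : E → ℝ≥0∞) {r b l : ℝ} (hr : 0 < r)
    (hbl : b ≤ l) :
    ∫⁻ x in (ball 0 r)ᶜ, f x * ENNReal.ofReal (‖x‖ ^ b) ∂μ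
      ≤ ENNReal.ofReal (r ^ (b - l))
        * ∫⁻ x in (ball 0 r)ᶜ, f x * ENNReal.ofReal (‖x‖ ^ l) ∂μ := by
  rw [← lintegral_const_mul' _ _ ofReal_ne_top]
  refine setLIntegral_mono' measurableSet_ball.compl fun x hx => ?_
  have hrx : r ≤ ‖x‖ := by simpa using hx
  have hsplit : ENNReal.ofReal (‖x‖ ^ b)
      = ENNReal.ofReal (‖x‖ ^ l) * ENNReal.ofReal (‖x‖ ^ (b - l)) := by
    rw [← ENNReal.ofReal_rpow_add (hr.trans_le hrx), add_sub_cancel]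
  calc f x * ENNReal.ofReal (‖x‖ ^ b)
      = f x * ENNReal.ofReal (‖x‖ ^ l) * ENNReal.ofReal (‖x‖ ^ (b - l)) := by
        rw [hsplit, mul_assoc]
    _ ≤ f x * ENNReal.ofReal (‖x‖ ^ l) * ENNReal.ofReal (r ^ (b - l)) :=
        mul_le_mul_right
          (ENNReal.ofReal_le_ofReal (Real.rpow_le_rpow_of_nonpos hr hrx (by linarith))) _
    _ = _ := mul_comm _ _

theorem setLIntegral_compl_ball_mul_rpow_norm_le_Lp_mul_Lq {f : E → ℝ≥0∞}
    (hf : AEMeasurable f μ) {s q : ℝ} (hsq : s.HolderConjugate q) {r b l : ℝ} (hr : 0 < r) :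
    ∫⁻ x in (ball 0 r)ᶜ, f x * ENNReal.ofReal (‖x‖ ^ b) ∂μ
      ≤ (∫⁻ x in (ball 0 r)ᶜ, f x ^ s * ENNReal.ofReal (‖x‖ ^ l) ∂μ) ^ (1 / s)
        * (∫⁻ x in (ball 0 r)ᶜ, ENNReal.ofReal (‖x‖ ^ ((b - l / s) * q)) ∂μ) ^ (1 / q) := by
  have hs0 : 0 < s := hsq.pos
  have key := ENNReal.lintegral_mul_le_Lp_mul_Lq (μ.restrict (ball 0 r)ᶜ) hsq
    (f := fun x => f x * ENNReal.ofReal (‖x‖ ^ (l / s)))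
    (g := fun x => ENNReal.ofReal (‖x‖ ^ (b - l / s))) (by fun_prop) (by fun_prop)
  have hprod : ∀ x ∈ (ball (0 : E) r)ᶜ, f x * ENNReal.ofReal (‖x‖ ^ b)
      = f x * ENNReal.ofReal (‖x‖ ^ (l / s)) * ENNReal.ofReal (‖x‖ ^ (b - l / s)) := by
    intro x hx
    have hx0 : 0 < ‖x‖ := hr.trans_le (by simpa using hx)
    rw [mul_assoc, ← ENNReal.ofReal_rpow_add hx0, add_sub_cancel]
  have hpow_s : ∀ x : E, (f x * ENNReal.ofReal (‖x‖ ^ (l / s))) ^ s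
      = f x ^ s * ENNReal.ofReal (‖x‖ ^ l) := by
    intro x
    rw [ENNReal.mul_rpow_of_nonneg _ _ hs0.le,
      ENNReal.ofReal_rpow_of_nonneg (by positivity) hs0.le, ← Real.rpow_mul (norm_nonneg x),
      div_mul_cancel₀ _ hs0.ne']
  have hpow_q : ∀ x : E, ENNReal.ofReal (‖x‖ ^ (b - l / s)) ^ q
      = ENNReal.ofReal (‖x‖ ^ ((b - l / s) * q)) := by
    intro x
    rw [ENNReal.ofReal_rpow_of_nonneg (by positivity) hsq.symm.nonneg,
      ← Real.rpow_mul (norm_nonneg x)]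
  rw [setLIntegral_congr_fun measurableSet_ball.compl hprod]
  simpa only [Pi.mul_apply, hpow_s, hpow_q] using key

end Normed

section AddHaar

variable {E : Type*} [NormedAddCommGroup E] [NormedSpace ℝ E] [FiniteDimensional ℝ E]
  [MeasurableSpace E] [BorelSpace E] (μ : Measure E) [μ.IsAddHaarMeasure]

theorem lintegral_comp_smul_of_pos (f : E → ℝ≥0∞) {R : ℝ} (hR : 0 < R) :
    ∫⁻ x, f (R • x) ∂μ = ENNReal.ofReal ((R ^ finrank ℝ E)⁻¹) * ∫⁻ x, f x ∂μ := by
  calc ∫⁻ x, f (R • x) ∂μ = ∫⁻ x, f x ∂(Measure.map (R • ·) μ) :=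
        ((Homeomorph.smulOfNeZero R hR.ne').measurableEmbedding.lintegral_map f).symm
    _ = _ := by
        rw [Measure.map_addHaar_smul μ hR.ne', lintegral_smul_measure,
          abs_of_pos (by positivity), smul_eq_mul]

theorem setLIntegral_compl_ball_rpow_norm {r : ℝ} (hr : 0 < r) (a : ℝ) :
    ∫⁻ x in (ball 0 r)ᶜ, ENNReal.ofReal (‖x‖ ^ a) ∂μ
      = ENNReal.ofReal (r ^ (finrank ℝ E + a))
        * ∫⁻ x in (ball 0 1)ᶜ, ENNReal.ofReal (‖x‖ ^ a) ∂μ := by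
  set g : E → ℝ≥0∞ := fun x => ENNReal.ofReal (‖x‖ ^ a)
  have hscale : ∀ y : E, (ball (0 : E) r)ᶜ.indicator g (r • y)
      = ENNReal.ofReal (r ^ a) * (ball (0 : E) 1)ᶜ.indicator g y := by
    intro y
    have hnorm : ‖r • y‖ = r * ‖y‖ := by rw [norm_smul, Real.norm_of_nonneg hr.le]
    have hmem : r • y ∈ (ball (0 : E) r)ᶜ ↔ y ∈ (ball (0 : E) 1)ᶜ := by
      simp only [Set.mem_compl_iff, mem_ball_zero_iff, hnorm, not_lt]
      constructor <;> intro h <;> nlinarith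
    by_cases hy : y ∈ (ball (0 : E) 1)ᶜ
    · rw [Set.indicator_of_mem (hmem.2 hy), Set.indicator_of_mem hy]
      simp only [g, hnorm, Real.mul_rpow hr.le (norm_nonneg y)]
      exact ENNReal.ofReal_mul (by positivity)
    · rw [Set.indicator_of_notMem (mt hmem.1 hy), Set.indicator_of_notMem hy, mul_zero]
  have hcomp := lintegral_comp_smul_of_pos μ ((ball (0 : E) r)ᶜ.indicator g) hr
  rw [funext hscale, lintegral_const_mul' _ _ ofReal_ne_top,
    lintegral_indicator measurableSet_ball.compl,
    lintegral_indicator measurableSet_ball.compl] at hcomp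
  rw [ENNReal.ofReal_rpow_add hr, mul_assoc, hcomp, ← mul_assoc,
    ← ENNReal.ofReal_mul (by positivity), Real.rpow_natCast, mul_inv_cancel₀ (by positivity),
    ENNReal.ofReal_one, one_mul]

theorem setLIntegral_compl_ball_one_rpow_norm_lt_top {a : ℝ} (ha : a < -(finrank ℝ E : ℝ)) :
    ∫⁻ x in (ball 0 1)ᶜ, ENNReal.ofReal (‖x‖ ^ a) ∂μ < ∞ := by
  have ha0 : a ≤ 0 := ha.le.trans (by simp)
  have hle : ∀ x ∈ (ball (0 : E) 1)ᶜ, ENNReal.ofReal (‖x‖ ^ a)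
      ≤ ENNReal.ofReal (2 ^ (-a)) * ENNReal.ofReal ((1 + ‖x‖) ^ (-(-a))) := by
    intro x hx
    have hx1 : 1 ≤ ‖x‖ := by simpa using hx
    rw [neg_neg, ← ENNReal.ofReal_mul (by positivity)]
    refine ENNReal.ofReal_le_ofReal ?_
    calc ‖x‖ ^ a = 2 ^ (-a) * (2 * ‖x‖) ^ a := by
          rw [Real.mul_rpow zero_le_two (norm_nonneg x), ← mul_assoc, ← Real.rpow_add two_pos,
            neg_add_cancel, Real.rpow_zero, one_mul]
      _ ≤ 2 ^ (-a) * (1 + ‖x‖) ^ a :=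
          mul_le_mul_of_nonneg_left
            (Real.rpow_le_rpow_of_nonpos (by linarith) (by linarith) ha0) (by positivity)
  calc ∫⁻ x in (ball 0 1)ᶜ, ENNReal.ofReal (‖x‖ ^ a) ∂μ
      ≤ ∫⁻ x, ENNReal.ofReal (2 ^ (-a)) * ENNReal.ofReal ((1 + ‖x‖) ^ (-(-a))) ∂μ :=
        (setLIntegral_mono' measurableSet_ball.compl hle).trans (setLIntegral_le_lintegral _ _)
    _ < ∞ := by
        rw [lintegral_const_mul' _ _ ofReal_ne_top]
        exact ENNReal.mul_lt_top ofReal_lt_top (finite_integral_one_add_norm (by linarith))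

theorem setLIntegral_ball_mul_rpow_norm_le_Lp {f : E → ℝ≥0∞} (hf : AEMeasurable f μ)
    {s b r : ℝ} (hs : 1 ≤ s) (hb : 0 ≤ b) (hr : 0 < r) :
    ∫⁻ x in ball 0 r, f x * ENNReal.ofReal (‖x‖ ^ b) ∂μ
      ≤ μ (ball 0 1) ^ (1 - 1 / s) * (∫⁻ x in ball 0 r, f x ^ s ∂μ) ^ (1 / s)
        * ENNReal.ofReal (r ^ (b + finrank ℝ E * (1 - 1 / s))) := by
  have hs' : 0 ≤ 1 - 1 / s := sub_nonneg.2 (div_le_one_of_le₀ hs (by linarith))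
  have hholder :=
    lintegral_le_lintegral_rpow_mul_measure_univ (μ.restrict (ball 0 r)) hf.restrict hs
  rw [Measure.restrict_apply_univ, Measure.addHaar_ball_of_pos μ 0 hr,
    ENNReal.mul_rpow_of_nonneg _ _ hs', ENNReal.ofReal_rpow_of_pos (by positivity),
    ← Real.rpow_natCast, ← Real.rpow_mul hr.le] at hholder
  calc ∫⁻ x in ball 0 r, f x * ENNReal.ofReal (‖x‖ ^ b) ∂μ
      ≤ ENNReal.ofReal (r ^ b) * ∫⁻ x in ball 0 r, f x ∂μ :=
        setLIntegral_ball_mul_rpow_norm_le μ f hb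
    _ ≤ ENNReal.ofReal (r ^ b) * ((∫⁻ x in ball 0 r, f x ^ s ∂μ) ^ (1 / s)
          * (ENNReal.ofReal (r ^ (finrank ℝ E * (1 - 1 / s)))
            * μ (ball 0 1) ^ (1 - 1 / s))) := by
        gcongr
    _ = _ := by
        rw [ENNReal.ofReal_rpow_add hr]
        ring

theorem exists_setLIntegral_compl_ball_mul_rpow_norm_le_Lp {s l b : ℝ} (hs : 1 ≤ s)
    (hb : b - l / s < -(finrank ℝ E : ℝ) * (1 - 1 / s)) :
    ∃ C : ℝ≥0∞, C ≠ ∞ ∧ ∀ f : E → ℝ≥0∞, AEMeasurable f μ → ∀ r : ℝ, 0 < r →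
      ∫⁻ x in (ball 0 r)ᶜ, f x * ENNReal.ofReal (‖x‖ ^ b) ∂μ
        ≤ C * (∫⁻ x in (ball 0 r)ᶜ, f x ^ s * ENNReal.ofReal (‖x‖ ^ l) ∂μ) ^ (1 / s)
          * ENNReal.ofReal (r ^ (b - l / s + finrank ℝ E * (1 - 1 / s))) := by
  rcases hs.eq_or_lt with rfl | hs1
  · refine ⟨1, one_ne_top, fun f _ r hr => ?_⟩
    simp only [div_one, sub_self, mul_zero, add_zero, ENNReal.rpow_one, one_mul] at hb ⊢
    exact (setLIntegral_compl_ball_mul_rpow_norm_le μ f hr (sub_neg.1 hb).le).trans_eq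
      (mul_comm _ _)
  set q := s.conjExponent
  have hsq : s.HolderConjugate q := .conjExponent hs1
  have hq : 1 / q = 1 - 1 / s := by
    rw [eq_sub_iff_add_eq, add_comm, one_div, one_div]
    exact hsq.inv_add_inv_eq_one
  have hq0 : 0 < q := hsq.symm.pos
  have ha : (b - l / s) * q < -(finrank ℝ E : ℝ) := by
    rwa [← hq, mul_one_div, lt_div_iff₀ hq0] at hb
  set K := ∫⁻ x in (ball (0 : E) 1)ᶜ, ENNReal.ofReal (‖x‖ ^ ((b - l / s) * q)) ∂μ
  have hK : K ≠ ∞ := (setLIntegral_compl_ball_one_rpow_norm_lt_top μ ha).ne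
  refine ⟨K ^ (1 / q), ENNReal.rpow_ne_top_of_nonneg (by positivity) hK, fun f hf r hr => ?_⟩
  calc ∫⁻ x in (ball 0 r)ᶜ, f x * ENNReal.ofReal (‖x‖ ^ b) ∂μ
      ≤ (∫⁻ x in (ball 0 r)ᶜ, f x ^ s * ENNReal.ofReal (‖x‖ ^ l) ∂μ) ^ (1 / s)
        * (ENNReal.ofReal (r ^ (finrank ℝ E + (b - l / s) * q)) * K) ^ (1 / q) := by
        rw [← setLIntegral_compl_ball_rpow_norm μ hr]
        exact setLIntegral_compl_ball_mul_rpow_norm_le_Lp_mul_Lq μ hf hsq hr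
    _ = _ := by
        rw [ENNReal.mul_rpow_of_nonneg _ _ (by positivity),
          ENNReal.ofReal_rpow_of_pos (by positivity), ← Real.rpow_mul hr.le, add_mul, mul_assoc,
          mul_one_div_cancel hq0.ne', mul_one, hq, add_comm (_ * _)]
        ring

end AddHaar

theorem stmt14_general (n : ℕ) (p s l : ℝ) (N : ℕ)
    (hs : 1 ≤ s)
    (hN : (N : ℝ) + 1 < l / s - (n : ℝ) * (1 - 1 / s)) :
    ∃ C : ℝ, 0 < C ∧
      ∀ (M : EuclideanSpace ℝ (Fin n) → ℂ) (r : ℝ), 0 < r → Measurable M →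
        (∫⁻ x in ball (0 : EuclideanSpace ℝ (Fin n)) r, (‖M x‖₊ : ℝ≥0∞) ^ s) ^ (1 / s)
          ≤ ENNReal.ofReal (r ^ ((n : ℝ) * (1 / s - 1 / p))) →
        (∫⁻ x in (ball (0 : EuclideanSpace ℝ (Fin n)) r)ᶜ,
            (‖M x‖₊ : ℝ≥0∞) ^ s * ENNReal.ofReal (‖x‖ ^ l)) ^ (1 / s)
          ≤ ENNReal.ofReal (r ^ (l / s + (n : ℝ) * (1 / s - 1 / p))) →
        ∫⁻ x, (‖M x‖₊ : ℝ≥0∞) * ENNReal.ofReal (‖x‖ ^ ((N : ℝ) + 1))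
          ≤ ENNReal.ofReal (C * r ^ ((N : ℝ) + 1 - (n : ℝ) * (1 / p - 1))) := by
  have hd : (finrank ℝ (EuclideanSpace ℝ (Fin n)) : ℝ) = n := by simp
  obtain ⟨K, hK, htail⟩ := exists_setLIntegral_compl_ball_mul_rpow_norm_le_Lp volume hs
    (b := (N : ℝ) + 1) (l := l) (by rw [hd]; linarith)
  set A := volume (ball (0 : EuclideanSpace ℝ (Fin n)) 1) ^ (1 - 1 / s)
  have hA : 0 < A := ENNReal.rpow_pos (measure_ball_pos _ _ one_pos) measure_ball_lt_top.ne
  have hAK : A + K ≠ ∞ := add_ne_top.2 ⟨ENNReal.rpow_ne_top_of_nonneg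
    (sub_nonneg.2 (div_le_one_of_le₀ hs (by linarith))) measure_ball_lt_top.ne, hK⟩
  refine ⟨(A + K).toReal, ENNReal.toReal_pos (hA.trans_le le_self_add).ne' hAK,
    fun M r hr hM h1 h2 => ?_⟩
  have hf : AEMeasurable (fun x => (‖M x‖₊ : ℝ≥0∞)) volume := by fun_prop
  have hball := setLIntegral_ball_mul_rpow_norm_le_Lp volume hf hs
    (b := (N : ℝ) + 1) (by positivity) hr
  have hcompl := htail _ hf r hr
  rw [hd] at hball hcompl
  rw [← lintegral_add_compl _ (measurableSet_ball (x := 0) (ε := r))]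
  calc _ ≤ A * ENNReal.ofReal (r ^ ((n : ℝ) * (1 / s - 1 / p)))
          * ENNReal.ofReal (r ^ ((N : ℝ) + 1 + n * (1 - 1 / s)))
        + K * ENNReal.ofReal (r ^ (l / s + (n : ℝ) * (1 / s - 1 / p)))
          * ENNReal.ofReal (r ^ ((N : ℝ) + 1 - l / s + n * (1 - 1 / s))) :=
        add_le_add (hball.trans (by gcongr)) (hcompl.trans (by gcongr))
    _ = (A + K) * ENNReal.ofReal (r ^ ((N : ℝ) + 1 - (n : ℝ) * (1 / p - 1))) := by
        simp_rw [mul_assoc, ← ENNReal.ofReal_rpow_add hr]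
        rw [add_mul]
        congr 4 <;> ring
    _ = _ := by rw [ENNReal.ofReal_mul ENNReal.toReal_nonneg, ofReal_toReal hAK]

/-- Weighted `L^1` bound for a molecule: if `N + 1 < λ/s - n/s'` then
`∫ |M(x)| |x|^{N+1} dx ≤ C r^{N+1 - n(1/p-1)}`. -/
theorem stmt14 (n : ℕ) (p s l : ℝ) (N : ℕ)
    (hp : 0 < p) (hp1 : p ≤ 1) (hs : 1 ≤ s) (hps : p < s)
    (hl : (n : ℝ) * (s / p - 1) < l)
    (hN : (N : ℝ) + 1 < l / s - (n : ℝ) * (1 - 1 / s)) :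
    ∃ C : ℝ, 0 < C ∧
      ∀ (M : EuclideanSpace ℝ (Fin n) → ℂ) (r : ℝ), 0 < r → Measurable M →
        (∫⁻ x in ball (0 : EuclideanSpace ℝ (Fin n)) r, (‖M x‖₊ : ℝ≥0∞) ^ s) ^ (1 / s)
          ≤ ENNReal.ofReal (r ^ ((n : ℝ) * (1 / s - 1 / p))) →
        (∫⁻ x in (ball (0 : EuclideanSpace ℝ (Fin n)) r)ᶜ,
            (‖M x‖₊ : ℝ≥0∞) ^ s * ENNReal.ofReal (‖x‖ ^ l)) ^ (1 / s)
          ≤ ENNReal.ofReal (r ^ (l / s + (n : ℝ) * (1 / s - 1 / p))) →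
        ∫⁻ x, (‖M x‖₊ : ℝ≥0∞) * ENNReal.ofReal (‖x‖ ^ ((N : ℝ) + 1))
          ≤ ENNReal.ofReal (C * r ^ ((N : ℝ) + 1 - (n : ℝ) * (1 / p - 1))) :=
  stmt14_general n p s l N hs hN
end

section
/- Let 0 < p ≤ 1 ≤ s < ∞ with p < s, λ > n(s/p - 1), and let M satisfy the molecule conditions (M1), (M2) with respect to B = B(0, r). Let γ ∈ (n(1/p - 1), λ/s - n/s') and N the integer with N < γ ≤ N + 1. Then for all ξ ∈ R^n, |M̂(ξ)| ≤ C ( |ξ|^γ r^{γ - n(1/p - 1)} + Σ_{|α| ≤ N} |ξ|^{|α|} |∫ M(x) x^α dx| ), with C depending only on n, p, s, λ, γ. -/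
/-!
Subtract from `e^{-2πi x·ξ}` its Taylor polynomial of degree `N` in `x`. The polynomial part
integrates against `M` to a combination of the moments `∫ M(x) x^α dx`, `|α| ≤ N`, with
coefficients `O(|ξ|^{|α|})`. Since `N < γ ≤ N + 1`, the remainder is `O(|x·ξ|^γ)` and contributes
`O(|ξ|^γ ∫ |M(x)| |x|^γ dx)`. This weighted integral is `O(r^{γ - n(1/p - 1)})` by Hölder's
inequality: against `1` on `B` using (M1), and against `|x|^{γ - λ/s}` on `Bᶜ` using (M2). There
`γ < λ/s - n/s'` makes `|x|^{(γ - λ/s)s'}` integrable outside a ball, and scaling yields the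
power of `r`.
-/

open MeasureTheory Metric ENNReal FourierTransform Module Set

section Holder

variable {E : Type*} [NormedAddCommGroup E] [MeasurableSpace E] [OpensMeasurableSpace E]
  (μ : Measure E)

theorem lintegral_ball_mul_rpow_le {s a r : ℝ} (hs : 1 ≤ s) (ha : 0 ≤ a) {g : E → ℝ≥0∞}
    (hg : AEMeasurable g μ) :
    ∫⁻ x in ball 0 r, g x * ENNReal.ofReal (‖x‖ ^ a) ∂μ ≤
      ENNReal.ofReal (r ^ a) * (∫⁻ x in ball 0 r, g x ^ s ∂μ) ^ (1 / s) *
        μ (ball 0 r) ^ (1 - 1 / s) := by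
  have hHolder := eLpNorm'_le_eLpNorm'_mul_rpow_measure_univ (μ := μ.restrict (ball 0 r))
    one_pos hs hg.restrict.aestronglyMeasurable
  simp only [eLpNorm'_eq_lintegral_enorm, enorm_eq_self, ENNReal.rpow_one, div_one,
    Measure.restrict_apply_univ] at hHolder
  calc ∫⁻ x in ball 0 r, g x * ENNReal.ofReal (‖x‖ ^ a) ∂μ
      ≤ ∫⁻ x in ball 0 r, ENNReal.ofReal (r ^ a) * g x ∂μ := by
        refine setLIntegral_mono' measurableSet_ball fun x hx => ?_
        rw [mul_comm]
        gcongr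
        exact (mem_ball_zero_iff.mp hx).le
    _ = ENNReal.ofReal (r ^ a) * ∫⁻ x in ball 0 r, g x ∂μ :=
        lintegral_const_mul' _ _ ofReal_ne_top
    _ ≤ _ := by
        rw [mul_assoc]
        gcongr

theorem lintegral_compl_ball_mul_rpow_le {s l a r : ℝ} (hs : 1 < s) (hr : 0 < r)
    {g : E → ℝ≥0∞} (hg : AEMeasurable g μ) :
    ∫⁻ x in (ball 0 r)ᶜ, g x * ENNReal.ofReal (‖x‖ ^ a) ∂μ ≤
      (∫⁻ x in (ball 0 r)ᶜ, g x ^ s * ENNReal.ofReal (‖x‖ ^ l) ∂μ) ^ (1 / s) *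
        (∫⁻ x in (ball 0 r)ᶜ, ENNReal.ofReal (‖x‖ ^ (-((l / s - a) * s.conjExponent))) ∂μ) ^
          (1 / s.conjExponent) := by
  have hsq := Real.HolderConjugate.conjExponent hs
  have hs0 : 0 < s := by linarith
  have hsplit : ∀ x ∈ (ball (0 : E) r)ᶜ, g x * ENNReal.ofReal (‖x‖ ^ a) =
      g x * ENNReal.ofReal (‖x‖ ^ (l / s)) * ENNReal.ofReal (‖x‖ ^ (a - l / s)) := by
    intro x hx
    have hx0 : 0 < ‖x‖ := hr.trans_le (by simpa using hx)
    rw [mul_assoc, ← ENNReal.ofReal_mul (by positivity), ← Real.rpow_add hx0, add_sub_cancel]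
  rw [setLIntegral_congr_fun measurableSet_ball.compl hsplit]
  refine (ENNReal.lintegral_mul_le_Lp_mul_Lq _ hsq (hg.restrict.mul (by fun_prop))
    (by fun_prop)).trans_eq ?_
  congr 2 <;> refine lintegral_congr fun x => ?_
  · rw [Pi.mul_apply, ENNReal.mul_rpow_of_nonneg _ _ hs0.le,
      ENNReal.ofReal_rpow_of_nonneg (by positivity) hs0.le, ← Real.rpow_mul (norm_nonneg x),
      div_mul_cancel₀ l hs0.ne']
  · rw [ENNReal.ofReal_rpow_of_nonneg (by positivity) hsq.symm.nonneg,
      ← Real.rpow_mul (norm_nonneg x), neg_mul_eq_neg_mul, neg_sub]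

end Holder

theorem ofReal_rpow_mul_ofReal_rpow {r : ℝ} (hr : 0 < r) (x y : ℝ) :
    ENNReal.ofReal (r ^ x) * ENNReal.ofReal (r ^ y) = ENNReal.ofReal (r ^ (x + y)) := by
  rw [← ENNReal.ofReal_mul (by positivity), ← Real.rpow_add hr]

section Molecule

variable {E : Type*} [NormedAddCommGroup E] [NormedSpace ℝ E] [MeasurableSpace E]

/-- Conditions (M1) and (M2) on `g = |M|` for the ball `B = ball 0 r`, with `l` for `λ`. -/
def IsMolecule (μ : Measure E) (p s l r : ℝ) (g : E → ℝ≥0∞) : Prop :=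
  (∫⁻ x in ball 0 r, g x ^ s ∂μ) ^ (1 / s) ≤
      ENNReal.ofReal (r ^ ((finrank ℝ E : ℝ) * (1 / s - 1 / p))) ∧
    (∫⁻ x in (ball 0 r)ᶜ, g x ^ s * ENNReal.ofReal (‖x‖ ^ l) ∂μ) ^ (1 / s) ≤
      ENNReal.ofReal (r ^ (l / s + (finrank ℝ E : ℝ) * (1 / s - 1 / p)))

theorem lintegral_compl_ball_mul_rpow_le_of_isMolecule_one [OpensMeasurableSpace E]
    (μ : Measure E) {p l a r : ℝ} (hal : a ≤ l) (hr : 0 < r) {g : E → ℝ≥0∞}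
    (hM : IsMolecule μ p 1 l r g) :
    ∫⁻ x in (ball 0 r)ᶜ, g x * ENNReal.ofReal (‖x‖ ^ a) ∂μ ≤
      ENNReal.ofReal (r ^ (a - (finrank ℝ E : ℝ) * (1 / p - 1))) := by
  have hM₂ := hM.2
  simp only [div_one, ENNReal.rpow_one] at hM₂
  calc ∫⁻ x in (ball 0 r)ᶜ, g x * ENNReal.ofReal (‖x‖ ^ a) ∂μ
      ≤ ∫⁻ x in (ball 0 r)ᶜ, ENNReal.ofReal (r ^ (a - l)) *
          (g x * ENNReal.ofReal (‖x‖ ^ l)) ∂μ := by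
        refine setLIntegral_mono' measurableSet_ball.compl fun x hx => ?_
        have hrx : r ≤ ‖x‖ := by simpa using hx
        rw [mul_left_comm, ← ENNReal.ofReal_mul (by positivity)]
        gcongr
        calc ‖x‖ ^ a = ‖x‖ ^ (a - l) * ‖x‖ ^ l := by
              rw [← Real.rpow_add (hr.trans_le hrx), sub_add_cancel]
          _ ≤ r ^ (a - l) * ‖x‖ ^ l := by
              refine mul_le_mul_of_nonneg_right ?_ (by positivity)
              exact Real.rpow_le_rpow_of_nonpos hr hrx (by linarith)
    _ = ENNReal.ofReal (r ^ (a - l)) * ∫⁻ x in (ball 0 r)ᶜ, g x * ENNReal.ofReal (‖x‖ ^ l) ∂μ :=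
        lintegral_const_mul' _ _ ofReal_ne_top
    _ ≤ ENNReal.ofReal (r ^ (a - l)) *
          ENNReal.ofReal (r ^ (l + (finrank ℝ E : ℝ) * (1 - 1 / p))) := by
        gcongr
    _ = _ := by
        rw [ofReal_rpow_mul_ofReal_rpow hr]
        ring_nf

end Molecule

section Haar

variable {E : Type*} [NormedAddCommGroup E] [NormedSpace ℝ E] [FiniteDimensional ℝ E]
  [MeasurableSpace E] [BorelSpace E] (μ : Measure E) [μ.IsAddHaarMeasure]

theorem lintegral_eq_ofReal_pow_mul_lintegral_comp_smul {f : E → ℝ≥0∞} (hf : Measurable f)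
    {R : ℝ} (hR : 0 < R) :
    ∫⁻ x, f x ∂μ = ENNReal.ofReal (R ^ finrank ℝ E) * ∫⁻ x, f (R • x) ∂μ := by
  rw [← lintegral_map hf (measurable_const_smul R), μ.map_addHaar_smul hR.ne',
    lintegral_smul_measure, smul_eq_mul, ← mul_assoc, ← ENNReal.ofReal_mul (by positivity),
    abs_of_pos (by positivity), mul_inv_cancel₀ (by positivity), ENNReal.ofReal_one, one_mul]

theorem lintegral_compl_ball_rpow_neg {r : ℝ} (hr : 0 < r) (b : ℝ) :
    ∫⁻ x in (ball (0 : E) r)ᶜ, ENNReal.ofReal (‖x‖ ^ (-b)) ∂μ =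
      ENNReal.ofReal (r ^ ((finrank ℝ E : ℝ) - b)) *
        ∫⁻ x in (ball (0 : E) 1)ᶜ, ENNReal.ofReal (‖x‖ ^ (-b)) ∂μ := by
  have hmeas : Measurable fun x : E => ENNReal.ofReal (‖x‖ ^ (-b)) := by fun_prop
  rw [← lintegral_indicator measurableSet_ball.compl,
    ← lintegral_indicator measurableSet_ball.compl,
    lintegral_eq_ofReal_pow_mul_lintegral_comp_smul μ (hmeas.indicator measurableSet_ball.compl) hr,
    ← lintegral_const_mul' _ _ ofReal_ne_top, ← lintegral_const_mul' _ _ ofReal_ne_top]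
  refine lintegral_congr fun x => ?_
  have hmem : r • x ∈ ball (0 : E) r ↔ x ∈ ball (0 : E) 1 := by
    simp [norm_smul, abs_of_pos hr, hr]
  by_cases hx : x ∈ ball (0 : E) 1
  · simp [hx, hmem.mpr hx]
  · rw [indicator_of_mem (hmem.not.mpr hx), indicator_of_mem hx,
      ← ENNReal.ofReal_mul (by positivity), ← ENNReal.ofReal_mul (by positivity), norm_smul,
      Real.norm_of_nonneg hr.le, Real.mul_rpow hr.le (norm_nonneg x), ← mul_assoc,
      Real.rpow_sub hr, ← Real.rpow_natCast, Real.rpow_neg hr.le, div_eq_mul_inv]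

theorem lintegral_compl_ball_one_rpow_neg_lt_top {b : ℝ} (hb : (finrank ℝ E : ℝ) < b) :
    ∫⁻ x in (ball (0 : E) 1)ᶜ, ENNReal.ofReal (‖x‖ ^ (-b)) ∂μ < ⊤ := by
  have hb0 : 0 ≤ b := (Nat.cast_nonneg _).trans hb.le
  have hint := (integrable_one_add_norm (μ := μ) hb).const_mul (2 ^ b)
  refine lt_of_le_of_lt ((setLIntegral_mono' measurableSet_ball.compl fun x hx => ?_).trans
    (setLIntegral_le_lintegral _ _)) hint.lintegral_lt_top
  have hx1 : 1 ≤ ‖x‖ := by simpa using hx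
  refine ENNReal.ofReal_le_ofReal ?_
  calc ‖x‖ ^ (-b) = 2 ^ b * (2 * ‖x‖) ^ (-b) := by
        rw [Real.mul_rpow zero_le_two (norm_nonneg x), ← mul_assoc, ← Real.rpow_add two_pos,
          add_neg_cancel, Real.rpow_zero, one_mul]
    _ ≤ 2 ^ b * (1 + ‖x‖) ^ (-b) := by
        refine mul_le_mul_of_nonneg_left ?_ (by positivity)
        exact Real.rpow_le_rpow_of_nonpos (by positivity) (by linarith) (neg_nonpos.mpr hb0)

theorem lintegral_ball_mul_rpow_le_of_isMolecule {p s l a r : ℝ} (hs : 1 ≤ s) (ha : 0 ≤ a)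
    (hr : 0 < r) {g : E → ℝ≥0∞} (hg : AEMeasurable g μ) (hM : IsMolecule μ p s l r g) :
    ∫⁻ x in ball 0 r, g x * ENNReal.ofReal (‖x‖ ^ a) ∂μ ≤
      μ (ball 0 1) ^ (1 - 1 / s) *
        ENNReal.ofReal (r ^ (a - (finrank ℝ E : ℝ) * (1 / p - 1))) := by
  have hs' : 0 ≤ 1 - 1 / s := sub_nonneg.mpr (div_le_one_of_le₀ hs (by linarith))
  calc ∫⁻ x in ball 0 r, g x * ENNReal.ofReal (‖x‖ ^ a) ∂μ
      ≤ ENNReal.ofReal (r ^ a) * (∫⁻ x in ball 0 r, g x ^ s ∂μ) ^ (1 / s) *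
          μ (ball 0 r) ^ (1 - 1 / s) := lintegral_ball_mul_rpow_le μ hs ha hg
    _ ≤ ENNReal.ofReal (r ^ a) * ENNReal.ofReal (r ^ ((finrank ℝ E : ℝ) * (1 / s - 1 / p))) *
          (ENNReal.ofReal (r ^ finrank ℝ E) * μ (ball 0 1)) ^ (1 - 1 / s) := by
        rw [μ.addHaar_ball_of_pos _ hr]
        gcongr
        exact hM.1
    _ = μ (ball 0 1) ^ (1 - 1 / s) * (ENNReal.ofReal (r ^ a) *
          ENNReal.ofReal (r ^ ((finrank ℝ E : ℝ) * (1 / s - 1 / p))) *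
          ENNReal.ofReal (r ^ ((finrank ℝ E : ℝ) * (1 - 1 / s)))) := by
        rw [ENNReal.mul_rpow_of_nonneg _ _ hs', ENNReal.ofReal_rpow_of_nonneg (by positivity) hs',
          ← Real.rpow_natCast, ← Real.rpow_mul hr.le]
        ring
    _ = _ := by
        rw [ofReal_rpow_mul_ofReal_rpow hr, ofReal_rpow_mul_ofReal_rpow hr]
        ring_nf

theorem lintegral_compl_ball_mul_rpow_le_of_isMolecule {p s l a r : ℝ} (hs : 1 < s)
    (hr : 0 < r) {g : E → ℝ≥0∞} (hg : AEMeasurable g μ) (hM : IsMolecule μ p s l r g) :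
    ∫⁻ x in (ball 0 r)ᶜ, g x * ENNReal.ofReal (‖x‖ ^ a) ∂μ ≤
      (∫⁻ x in (ball (0 : E) 1)ᶜ, ENNReal.ofReal (‖x‖ ^ (-((l / s - a) * s.conjExponent))) ∂μ) ^
          (1 / s.conjExponent) *
        ENNReal.ofReal (r ^ (a - (finrank ℝ E : ℝ) * (1 / p - 1))) := by
  have hsq := Real.HolderConjugate.conjExponent hs
  set q := s.conjExponent
  have hq0 : 0 < q := hsq.symm.pos
  have hq : 1 / q = 1 - 1 / s := by rw [one_div, one_div, hsq.one_sub_inv]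
  set b := (l / s - a) * q
  set c := ∫⁻ x in (ball (0 : E) 1)ᶜ, ENNReal.ofReal (‖x‖ ^ (-b)) ∂μ
  calc ∫⁻ x in (ball 0 r)ᶜ, g x * ENNReal.ofReal (‖x‖ ^ a) ∂μ
      ≤ (∫⁻ x in (ball 0 r)ᶜ, g x ^ s * ENNReal.ofReal (‖x‖ ^ l) ∂μ) ^ (1 / s) *
          (ENNReal.ofReal (r ^ ((finrank ℝ E : ℝ) - b)) * c) ^ (1 / q) := by
        rw [← lintegral_compl_ball_rpow_neg μ hr]
        exact lintegral_compl_ball_mul_rpow_le μ hs hr hg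
    _ ≤ ENNReal.ofReal (r ^ (l / s + (finrank ℝ E : ℝ) * (1 / s - 1 / p))) *
          (ENNReal.ofReal (r ^ ((finrank ℝ E : ℝ) - b)) * c) ^ (1 / q) := by
        gcongr
        exact hM.2
    _ = c ^ (1 / q) * (ENNReal.ofReal (r ^ (l / s + (finrank ℝ E : ℝ) * (1 / s - 1 / p))) *
          ENNReal.ofReal (r ^ (((finrank ℝ E : ℝ) - b) * (1 / q)))) := by
        rw [ENNReal.mul_rpow_of_nonneg _ _ (one_div_nonneg.mpr hq0.le),
          ENNReal.ofReal_rpow_of_nonneg (by positivity) (one_div_nonneg.mpr hq0.le),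
          ← Real.rpow_mul hr.le]
        ring
    _ = _ := by
        rw [ofReal_rpow_mul_ofReal_rpow hr, sub_mul, mul_assoc, mul_one_div_cancel hq0.ne', hq]
        ring_nf

theorem exists_lintegral_mul_rpow_le_of_isMolecule {p s l a : ℝ} (hs : 1 ≤ s) (ha : 0 ≤ a)
    (hal : a < l / s - (finrank ℝ E : ℝ) * (1 - 1 / s)) :
    ∃ A : ℝ≥0∞, A ≠ ⊤ ∧ ∀ (g : E → ℝ≥0∞) (r : ℝ), 0 < r → AEMeasurable g μ →
      IsMolecule μ p s l r g →
        ∫⁻ x, g x * ENNReal.ofReal (‖x‖ ^ a) ∂μ ≤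
          A * ENNReal.ofReal (r ^ (a - (finrank ℝ E : ℝ) * (1 / p - 1))) := by
  have hs' : 0 ≤ 1 - 1 / s := sub_nonneg.mpr (div_le_one_of_le₀ hs (by linarith))
  obtain ⟨c, hc, hcompl⟩ : ∃ c : ℝ≥0∞, c ≠ ⊤ ∧ ∀ (g : E → ℝ≥0∞) (r : ℝ), 0 < r →
      AEMeasurable g μ → IsMolecule μ p s l r g →
        ∫⁻ x in (ball 0 r)ᶜ, g x * ENNReal.ofReal (‖x‖ ^ a) ∂μ ≤
          c * ENNReal.ofReal (r ^ (a - (finrank ℝ E : ℝ) * (1 / p - 1))) := by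
    rcases hs.eq_or_lt with rfl | hs
    · refine ⟨1, one_ne_top, fun g r hr _ hM => ?_⟩
      rw [one_mul]
      exact lintegral_compl_ball_mul_rpow_le_of_isMolecule_one μ (by simpa using hal.le) hr hM
    · have hsq := Real.HolderConjugate.conjExponent hs
      have hq0 : 0 < s.conjExponent := hsq.symm.pos
      have hb : (finrank ℝ E : ℝ) < (l / s - a) * s.conjExponent := by
        rw [one_div s, hsq.one_sub_inv, ← div_eq_mul_inv] at hal
        exact (div_lt_iff₀ hq0).mp (by linarith)
      exact ⟨_, rpow_ne_top_of_nonneg (one_div_nonneg.mpr hq0.le)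
        (lintegral_compl_ball_one_rpow_neg_lt_top μ hb).ne,
        fun g r hr hg hM => lintegral_compl_ball_mul_rpow_le_of_isMolecule μ hs hr hg hM⟩
  refine ⟨μ (ball 0 1) ^ (1 - 1 / s) + c,
    add_ne_top.mpr ⟨rpow_ne_top_of_nonneg hs' measure_ball_lt_top.ne, hc⟩,
    fun g r hr hg hM => ?_⟩
  rw [← lintegral_add_compl _ measurableSet_ball, add_mul]
  exact add_le_add (lintegral_ball_mul_rpow_le_of_isMolecule μ hs ha hr hg hM)
    (hcompl g r hr hg hM)

theorem exists_integral_rpow_mul_norm_le_of_isMolecule {F : Type*} [NormedAddCommGroup F]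
    {p s l a : ℝ} (hs : 1 ≤ s) (ha : 0 ≤ a) (hal : a < l / s - (finrank ℝ E : ℝ) * (1 - 1 / s)) :
    ∃ A : ℝ, 0 ≤ A ∧ ∀ (M : E → F) (r : ℝ), 0 < r → AEStronglyMeasurable M μ →
      IsMolecule μ p s l r (fun x => ‖M x‖ₑ) →
        Integrable (fun x => ‖x‖ ^ a * ‖M x‖) μ ∧
          ∫ x, ‖x‖ ^ a * ‖M x‖ ∂μ ≤ A * r ^ (a - (finrank ℝ E : ℝ) * (1 / p - 1)) := by
  obtain ⟨A, hA, hbound⟩ := exists_lintegral_mul_rpow_le_of_isMolecule μ hs ha hal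
  refine ⟨A.toReal, toReal_nonneg, fun M r hr hM hmol => ?_⟩
  have hle := hbound _ r hr hM.enorm hmol
  rw [← ofReal_toReal hA, ← ENNReal.ofReal_mul toReal_nonneg] at hle
  have henorm : ∀ x, ENNReal.ofReal (‖x‖ ^ a * ‖M x‖) = ‖M x‖ₑ * ENNReal.ofReal (‖x‖ ^ a) := by
    intro x
    rw [ENNReal.ofReal_mul (by positivity), ofReal_norm, mul_comm]
  have hmeas : AEStronglyMeasurable (fun x => ‖x‖ ^ a * ‖M x‖) μ := by
    have : Continuous fun x : E => ‖x‖ ^ a := by fun_prop (disch := exact ha)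
    exact this.aestronglyMeasurable.mul hM.norm
  refine ⟨⟨hmeas, ?_⟩, ?_⟩
  · have : ∀ x, ‖‖x‖ ^ a * ‖M x‖‖ₑ = ‖M x‖ₑ * ENNReal.ofReal (‖x‖ ^ a) := fun x => by
      rw [Real.enorm_of_nonneg (by positivity), henorm]
    simp_rw [HasFiniteIntegral, this]
    exact hle.trans_lt ofReal_lt_top
  · rw [integral_eq_lintegral_of_nonneg_ae (ae_of_all _ fun x => by positivity) hmeas]
    simp_rw [henorm]
    exact toReal_le_of_le_ofReal (by positivity) hle

end Haar

section Taylor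

open Complex Finset

noncomputable def expITaylorRemainder (N : ℕ) (θ : ℝ) : ℂ :=
  exp (θ * I) - ∑ k ∈ range (N + 1), (θ * I) ^ k / k.factorial

theorem norm_expITaylorRemainder_le {N : ℕ} {γ : ℝ} (hNγ : (N : ℝ) ≤ γ) (hγN : γ ≤ N + 1)
    (θ : ℝ) : ‖expITaylorRemainder N θ‖ ≤ (N + 2) * |θ| ^ γ := by
  have hnorm : ‖(θ : ℂ) * I‖ = |θ| := by simp
  have hγ0 : 0 ≤ γ := (Nat.cast_nonneg N).trans hNγ
  rcases le_total |θ| 1 with hθ | hθ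
  · have hexp := exp_bound (x := θ * I) (hnorm.trans_le hθ) N.succ_pos
    rw [hnorm] at hexp
    have hcoeff : ((N + 1).succ : ℝ) * ((N + 1).factorial * (N + 1 : ℕ) : ℝ)⁻¹ ≤ N + 2 := by
      have : (1 : ℝ) ≤ (N + 1).factorial * (N + 1 : ℕ) := by
        exact_mod_cast Nat.one_le_iff_ne_zero.mpr (by positivity)
      calc _ ≤ ((N + 1).succ : ℝ) * 1 := by gcongr; exact inv_le_one_of_one_le₀ this
        _ = N + 2 := by push_cast; ring
    have hpow : |θ| ^ (N + 1) ≤ |θ| ^ γ := by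
      rw [← Real.rpow_natCast]
      exact Real.rpow_le_rpow_of_exponent_ge' (abs_nonneg θ) hθ hγ0 (by push_cast; exact hγN)
    calc ‖expITaylorRemainder N θ‖ ≤ _ := hexp
      _ ≤ |θ| ^ γ * (N + 2) := mul_le_mul hpow hcoeff (by positivity) (by positivity)
      _ = _ := mul_comm _ _
  · have hterm : ∀ k ∈ range (N + 1), ‖((θ : ℂ) * I) ^ k / k.factorial‖ ≤ |θ| ^ γ := by
      intro k hk
      have hkγ : (k : ℝ) ≤ γ := le_trans (by exact_mod_cast mem_range_succ_iff.mp hk) hNγ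
      rw [norm_div, norm_pow, hnorm, norm_natCast]
      calc |θ| ^ k / k.factorial ≤ |θ| ^ k :=
            div_le_self (by positivity) (by exact_mod_cast k.factorial_pos)
        _ ≤ |θ| ^ γ := by
            rw [← Real.rpow_natCast]
            exact Real.rpow_le_rpow_of_exponent_le hθ hkγ
    calc ‖expITaylorRemainder N θ‖
        ≤ ‖exp (θ * I)‖ + ∑ k ∈ range (N + 1), ‖((θ : ℂ) * I) ^ k / k.factorial‖ :=
          (norm_sub_le _ _).trans (add_le_add_right (norm_sum_le _ _) _)
      _ ≤ |θ| ^ γ + ∑ k ∈ range (N + 1), |θ| ^ γ := by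
          gcongr with k hk
          · rw [norm_exp_ofReal_mul_I]
            exact Real.one_le_rpow hθ hγ0
          · exact hterm k hk
      _ = (N + 2) * |θ| ^ γ := by
          rw [sum_const, card_range, nsmul_eq_mul]
          push_cast
          ring

end Taylor

theorem integrable_mul_of_norm_le_mul {α : Type*} [MeasurableSpace α] {μ : Measure α}
    {M f : α → ℂ} {w : α → ℝ} (hw : Integrable (fun x => w x * ‖M x‖) μ)
    (hM : AEStronglyMeasurable M μ) (hf : AEStronglyMeasurable f μ) {C : ℝ}
    (hfw : ∀ x, ‖f x‖ ≤ C * w x) : Integrable (fun x => M x * f x) μ :=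
  (hw.const_mul C).mono' (hM.mul hf) (ae_of_all _ fun x => by
    rw [norm_mul, mul_comm, ← mul_assoc]
    exact mul_le_mul_of_nonneg_right (hfw x) (norm_nonneg _))

section Fourier

open Complex Finset Real
open scoped InnerProductSpace

variable {V : Type*} [NormedAddCommGroup V] [InnerProductSpace ℝ V] [FiniteDimensional ℝ V]
  [MeasurableSpace V] [BorelSpace V]

theorem integrable_mul_inner_pow {M : V → ℂ} (hM : AEStronglyMeasurable M) {k : ℕ}
    (hMk : Integrable fun x => ‖x‖ ^ k * ‖M x‖) (ξ : V) :
    Integrable fun x => M x * ((⟪x, ξ⟫_ℝ ^ k : ℝ) : ℂ) := by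
  refine integrable_mul_of_norm_le_mul hMk hM (by fun_prop) (C := ‖ξ‖ ^ k) fun x => ?_
  rw [norm_real, norm_pow, Real.norm_eq_abs, ← mul_pow, mul_comm]
  gcongr
  exact abs_real_inner_le_norm x ξ

theorem fourier_eq_integral_expITaylorRemainder_add_sum {M : V → ℂ}
    (hM : AEStronglyMeasurable M) {N : ℕ} (hmom : ∀ k ≤ N, Integrable fun x => ‖x‖ ^ k * ‖M x‖)
    (ξ : V) :
    𝓕 M ξ = (∫ x, M x * expITaylorRemainder N (-2 * π * ⟪x, ξ⟫_ℝ)) +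
      ∑ k ∈ range (N + 1),
        (-2 * π * I) ^ k / k.factorial * ∫ x, M x * ((⟪x, ξ⟫_ℝ ^ k : ℝ) : ℂ) := by
  have hpow : ∀ k ∈ range (N + 1), Integrable fun x => M x * ((⟪x, ξ⟫_ℝ ^ k : ℝ) : ℂ) :=
    fun k hk => integrable_mul_inner_pow hM (hmom k (mem_range_succ_iff.mp hk)) ξ
  set P := fun x => ∑ k ∈ range (N + 1),
    (-2 * π * I) ^ k / k.factorial * (M x * ((⟪x, ξ⟫_ℝ ^ k : ℝ) : ℂ))
  have hP : Integrable P := integrable_finsetSum _ fun k hk => (hpow k hk).const_mul _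
  have hsplit : ∀ x, Complex.exp (↑(-2 * π * ⟪x, ξ⟫_ℝ) * I) • M x =
      M x * expITaylorRemainder N (-2 * π * ⟪x, ξ⟫_ℝ) + P x := by
    intro x
    simp only [expITaylorRemainder, P, smul_eq_mul, mul_sub, mul_sum]
    rw [sub_add_eq_add_sub, eq_sub_iff_add_eq]
    congr 1
    · ring
    · refine sum_congr rfl fun k _ => ?_
      push_cast
      ring
  have hexp : Integrable fun x => M x * Complex.exp (↑(-2 * π * ⟪x, ξ⟫_ℝ) * I) :=
    integrable_mul_of_norm_le_mul (w := fun _ => 1) (by simpa using hmom 0 N.zero_le) hM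
      (by fun_prop) (C := 1) fun x => by rw [norm_exp_ofReal_mul_I, one_mul]
  have hR : Integrable fun x => M x * expITaylorRemainder N (-2 * π * ⟪x, ξ⟫_ℝ) := by
    refine (hexp.sub hP).congr (ae_of_all _ fun x => ?_)
    rw [Pi.sub_apply, sub_eq_iff_eq_add, mul_comm, ← smul_eq_mul, hsplit]
  rw [Real.fourier_eq']
  simp_rw [hsplit]
  rw [integral_add hR hP, integral_finsetSum _ fun k hk => (hpow k hk).const_mul _]
  simp_rw [integral_const_mul]

theorem norm_integral_mul_expITaylorRemainder_le {M : V → ℂ} {N : ℕ} {γ : ℝ}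
    (hNγ : (N : ℝ) ≤ γ) (hγN : γ ≤ N + 1) (hMγ : Integrable fun x => ‖x‖ ^ γ * ‖M x‖) (ξ : V) :
    ‖∫ x, M x * expITaylorRemainder N (-2 * π * ⟪x, ξ⟫_ℝ)‖ ≤
      (N + 2) * (2 * π * ‖ξ‖) ^ γ * ∫ x, ‖x‖ ^ γ * ‖M x‖ := by
  have hγ0 : 0 ≤ γ := (Nat.cast_nonneg N).trans hNγ
  rw [← integral_const_mul]
  refine norm_integral_le_of_norm_le (hMγ.const_mul _) (ae_of_all _ fun x => ?_)
  have hθ : |-2 * π * ⟪x, ξ⟫_ℝ| ≤ 2 * π * ‖ξ‖ * ‖x‖ := by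
    rw [abs_mul, abs_mul, abs_neg, abs_two, abs_of_pos pi_pos]
    calc 2 * π * |⟪x, ξ⟫_ℝ| ≤ 2 * π * (‖x‖ * ‖ξ‖) := by
          gcongr
          exact abs_real_inner_le_norm x ξ
      _ = _ := by ring
  calc ‖M x * expITaylorRemainder N (-2 * π * ⟪x, ξ⟫_ℝ)‖
      ≤ ‖M x‖ * ((N + 2) * |-2 * π * ⟪x, ξ⟫_ℝ| ^ γ) := by
        rw [norm_mul]
        gcongr
        exact norm_expITaylorRemainder_le hNγ hγN _
    _ ≤ ‖M x‖ * ((N + 2) * (2 * π * ‖ξ‖ * ‖x‖) ^ γ) := by gcongr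
    _ = _ := by
        rw [Real.mul_rpow (by positivity) (norm_nonneg x)]
        ring

end Fourier

section MultiIndex

open Finset

variable {ι : Type*} [DecidableEq ι] {k : ℕ}

def multiIndex (f : Fin k → ι) (i : ι) : ℕ := #{j | f j = i}

theorem sum_multiIndex [Fintype ι] (f : Fin k → ι) : ∑ i, multiIndex f i = k := by
  simp only [multiIndex]
  rw [← card_eq_sum_card_fiberwise fun j _ => mem_univ (f j), card_univ, Fintype.card_fin]

theorem prod_comp_eq_prod_pow_multiIndex [Fintype ι] {R : Type*} [CommMonoid R] (x : ι → R)
    (f : Fin k → ι) :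
    ∏ j, x (f j) = ∏ i, x i ^ multiIndex f i := by
  rw [← prod_fiberwise_of_maps_to' fun j _ => mem_univ (f j)]
  simp [multiIndex]

theorem sum_mul_pow_eq_sum_prod_mul_prod_pow [Fintype ι] {R : Type*} [CommSemiring R]
    (x y : ι → R) (k : ℕ) :
    (∑ i, x i * y i) ^ k = ∑ f : Fin k → ι, (∏ j, y (f j)) * ∏ i, x i ^ multiIndex f i := by
  rw [← Fin.prod_const, Fintype.prod_sum]
  refine sum_congr rfl fun f _ => ?_
  rw [prod_mul_distrib, mul_comm, prod_comp_eq_prod_pow_multiIndex x f]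

end MultiIndex

section Moments

open Complex Finset Real
open scoped InnerProductSpace

variable {n : ℕ}

noncomputable def moment (M : EuclideanSpace ℝ (Fin n) → ℂ) (α : Fin n → ℕ) : ℂ :=
  ∫ x, M x * ((∏ i, x i ^ α i : ℝ) : ℂ)

noncomputable def momentSum (N : ℕ) (M : EuclideanSpace ℝ (Fin n) → ℂ)
    (ξ : EuclideanSpace ℝ (Fin n)) : ℝ :=
  ∑ α ∈ (Fintype.piFinset fun _ : Fin n => range (N + 1)) |>.filter (fun α => ∑ i, α i ≤ N),
    ‖ξ‖ ^ ((∑ i, (α i : ℝ))) * ‖moment M α‖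

theorem pow_mul_norm_moment_le_momentSum {N : ℕ} {α : Fin n → ℕ} (hα : ∑ i, α i ≤ N)
    (M : EuclideanSpace ℝ (Fin n) → ℂ) (ξ : EuclideanSpace ℝ (Fin n)) :
    ‖ξ‖ ^ (∑ i, α i) * ‖moment M α‖ ≤ momentSum N M ξ := by
  have hmem : α ∈ (Fintype.piFinset fun _ : Fin n => range (N + 1)).filter
      (fun α => ∑ i, α i ≤ N) := by
    simp only [mem_filter, Fintype.mem_piFinset, mem_range_succ_iff]
    exact ⟨fun i => (single_le_sum (fun j _ => (α j).zero_le) (mem_univ i)).trans hα, hα⟩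
  have := single_le_sum (fun β _ => by positivity) hmem
    (f := fun β => ‖ξ‖ ^ ((∑ i, (β i : ℝ))) * ‖moment M β‖)
  rwa [← Nat.cast_sum, Real.rpow_natCast] at this

theorem abs_prod_pow_le_norm_pow_sum (x : EuclideanSpace ℝ (Fin n)) (α : Fin n → ℕ) :
    |∏ i, x i ^ α i| ≤ ‖x‖ ^ ∑ i, α i := by
  rw [abs_prod, ← prod_pow_eq_pow_sum]
  gcongr with i
  rw [abs_pow, ← Real.norm_eq_abs]
  gcongr
  exact PiLp.norm_apply_le x i

theorem integral_mul_inner_pow_eq_sum_moment {M : EuclideanSpace ℝ (Fin n) → ℂ}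
    (hM : AEStronglyMeasurable M) {k : ℕ} (hMk : Integrable fun x => ‖x‖ ^ k * ‖M x‖)
    (ξ : EuclideanSpace ℝ (Fin n)) :
    ∫ x, M x * ((⟪x, ξ⟫_ℝ ^ k : ℝ) : ℂ) =
      ∑ f : Fin k → Fin n, ((∏ j, ξ (f j) : ℝ) : ℂ) * moment M (multiIndex f) := by
  have hmono : ∀ f : Fin k → Fin n,
      Integrable fun x => M x * ((∏ i, x i ^ multiIndex f i : ℝ) : ℂ) := fun f =>
    integrable_mul_of_norm_le_mul hMk hM (by fun_prop) (C := 1) fun x => by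
      rw [norm_real, Real.norm_eq_abs, one_mul]
      simpa only [sum_multiIndex] using abs_prod_pow_le_norm_pow_sum x (multiIndex f)
  have hexpand : ∀ x : EuclideanSpace ℝ (Fin n), M x * ((⟪x, ξ⟫_ℝ ^ k : ℝ) : ℂ) =
      ∑ f : Fin k → Fin n,
        ((∏ j, ξ (f j) : ℝ) : ℂ) * (M x * ((∏ i, x i ^ multiIndex f i : ℝ) : ℂ)) := by
    intro x
    have hinner : ⟪x, ξ⟫_ℝ = ∑ i, x i * ξ i := by simp [PiLp.inner_apply, mul_comm]
    rw [hinner, sum_mul_pow_eq_sum_prod_mul_prod_pow, ofReal_sum, mul_sum]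
    refine sum_congr rfl fun f _ => ?_
    push_cast
    ring
  simp_rw [hexpand]
  rw [integral_finsetSum _ fun f _ => (hmono f).const_mul _]
  simp_rw [integral_const_mul, moment]

theorem norm_integral_mul_inner_pow_le {M : EuclideanSpace ℝ (Fin n) → ℂ}
    (hM : AEStronglyMeasurable M) {N k : ℕ} (hk : k ≤ N)
    (hMk : Integrable fun x => ‖x‖ ^ k * ‖M x‖) (ξ : EuclideanSpace ℝ (Fin n)) :
    ‖∫ x, M x * ((⟪x, ξ⟫_ℝ ^ k : ℝ) : ℂ)‖ ≤ n ^ k * momentSum N M ξ := by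
  rw [integral_mul_inner_pow_eq_sum_moment hM hMk ξ]
  calc ‖∑ f : Fin k → Fin n, ((∏ j, ξ (f j) : ℝ) : ℂ) * moment M (multiIndex f)‖
      ≤ ∑ _f : Fin k → Fin n, momentSum N M ξ := by
        refine (norm_sum_le _ _).trans (sum_le_sum fun f _ => ?_)
        have hξ := abs_prod_pow_le_norm_pow_sum ξ (multiIndex f)
        rw [← prod_comp_eq_prod_pow_multiIndex, sum_multiIndex] at hξ
        have hmom := pow_mul_norm_moment_le_momentSum ((sum_multiIndex f).trans_le hk) M ξ
        rw [sum_multiIndex] at hmom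
        rw [norm_mul, norm_real, Real.norm_eq_abs]
        exact (mul_le_mul_of_nonneg_right hξ (norm_nonneg _)).trans hmom
    _ = n ^ k * momentSum N M ξ := by
        rw [sum_const, card_univ, Fintype.card_fun, Fintype.card_fin, Fintype.card_fin,
          nsmul_eq_mul]
        push_cast
        ring

theorem norm_fourier_le {M : EuclideanSpace ℝ (Fin n) → ℂ} (hM : AEStronglyMeasurable M)
    {N : ℕ} {γ : ℝ} (hNγ : (N : ℝ) ≤ γ) (hγN : γ ≤ N + 1)
    (hmom : ∀ k ≤ N, Integrable fun x => ‖x‖ ^ k * ‖M x‖)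
    (hMγ : Integrable fun x => ‖x‖ ^ γ * ‖M x‖) (ξ : EuclideanSpace ℝ (Fin n)) :
    ‖𝓕 M ξ‖ ≤ (N + 2) * (2 * π * ‖ξ‖) ^ γ * (∫ x, ‖x‖ ^ γ * ‖M x‖) +
      (∑ k ∈ range (N + 1), (2 * π * n) ^ k / k.factorial) * momentSum N M ξ := by
  rw [fourier_eq_integral_expITaylorRemainder_add_sum hM hmom ξ, sum_mul]
  refine (norm_add_le _ _).trans
    (add_le_add (norm_integral_mul_expITaylorRemainder_le hNγ hγN hMγ ξ) ?_)
  refine (norm_sum_le _ _).trans (sum_le_sum fun k hk => ?_)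
  have hk := mem_range_succ_iff.mp hk
  have hc : ‖(-2 * π * I) ^ k / k.factorial‖ = (2 * π) ^ k / k.factorial := by
    simp [abs_of_pos pi_pos]
  rw [norm_mul, hc]
  calc (2 * π) ^ k / k.factorial * ‖∫ x, M x * ((⟪x, ξ⟫_ℝ ^ k : ℝ) : ℂ)‖
      ≤ (2 * π) ^ k / k.factorial * (n ^ k * momentSum N M ξ) := by
        gcongr
        exact norm_integral_mul_inner_pow_le hM hk (hmom k hk) ξ
    _ = _ := by ring

end Moments

theorem stmt15_general (n : ℕ) (p s l γ : ℝ) (N : ℕ)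
    (hs : 1 ≤ s)
    (hγ2 : γ < l / s - (n : ℝ) * (1 - 1 / s))
    (hN1 : (N : ℝ) < γ) (hN2 : γ ≤ (N : ℝ) + 1) :
    ∃ C : ℝ, 0 < C ∧
      ∀ (M : EuclideanSpace ℝ (Fin n) → ℂ) (r : ℝ), 0 < r → Measurable M →
        (∫⁻ x in ball (0 : EuclideanSpace ℝ (Fin n)) r, (‖M x‖₊ : ℝ≥0∞) ^ s) ^ (1 / s)
          ≤ ENNReal.ofReal (r ^ ((n : ℝ) * (1 / s - 1 / p))) →
        (∫⁻ x in (ball (0 : EuclideanSpace ℝ (Fin n)) r)ᶜ,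
            (‖M x‖₊ : ℝ≥0∞) ^ s * ENNReal.ofReal (‖x‖ ^ l)) ^ (1 / s)
          ≤ ENNReal.ofReal (r ^ (l / s + (n : ℝ) * (1 / s - 1 / p))) →
        ∀ ξ : EuclideanSpace ℝ (Fin n),
          ‖𝓕 M ξ‖ ≤ C *
            (‖ξ‖ ^ γ * r ^ (γ - (n : ℝ) * (1 / p - 1)) +
              ∑ α ∈ (Fintype.piFinset fun _ : Fin n => Finset.range (N + 1)) |>.filter
                  (fun α => ∑ i, α i ≤ N),
                ‖ξ‖ ^ ((∑ i, (α i : ℝ))) *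
                  ‖∫ x, M x * ((∏ i, x i ^ α i : ℝ) : ℂ)‖) := by
  have hNγ : (N : ℝ) ≤ γ := hN1.le
  have hdim : (finrank ℝ (EuclideanSpace ℝ (Fin n)) : ℝ) = n := by simp
  have hweight : ∀ a : ℝ, 0 ≤ a → a ≤ γ → ∃ A : ℝ, 0 ≤ A ∧
      ∀ (M : EuclideanSpace ℝ (Fin n) → ℂ) (r : ℝ), 0 < r → AEStronglyMeasurable M →
        IsMolecule volume p s l r (fun x => ‖M x‖ₑ) →
          Integrable (fun x => ‖x‖ ^ a * ‖M x‖) ∧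
            ∫ x, ‖x‖ ^ a * ‖M x‖ ≤ A * r ^ (a - (n : ℝ) * (1 / p - 1)) := fun a ha haγ => by
    have h := exists_integral_rpow_mul_norm_le_of_isMolecule volume (F := ℂ) (p := p) (l := l)
      hs ha (by rw [hdim]; linarith)
    rwa [hdim] at h
  obtain ⟨A, hA, hAγ⟩ := hweight γ ((Nat.cast_nonneg N).trans hNγ) le_rfl
  set C₂ := ∑ k ∈ Finset.range (N + 1), (2 * Real.pi * n) ^ k / k.factorial
  have hC₂ : 0 < C₂ := Finset.sum_pos' (fun k _ => by positivity) ⟨0, by simp, by simp⟩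
  refine ⟨(N + 2) * (2 * Real.pi) ^ γ * A + C₂, by positivity, fun M r hr hM h1 h2 ξ => ?_⟩
  have hmol : IsMolecule volume p s l r (fun x => ‖M x‖ₑ) := by
    rw [IsMolecule, hdim]
    exact ⟨h1, h2⟩
  have hmom : ∀ k ≤ N, Integrable fun x => ‖x‖ ^ k * ‖M x‖ := fun k hk => by
    obtain ⟨_, _, hAk⟩ := hweight k k.cast_nonneg ((Nat.cast_le.mpr hk).trans hNγ)
    simpa only [Real.rpow_natCast] using (hAk M r hr hM.aestronglyMeasurable hmol).1
  obtain ⟨hMγ, hbound⟩ := hAγ M r hr hM.aestronglyMeasurable hmol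
  have hS : 0 ≤ momentSum N M ξ := Finset.sum_nonneg fun _ _ => by positivity
  have hX : 0 ≤ ‖ξ‖ ^ γ * r ^ (γ - (n : ℝ) * (1 / p - 1)) := by positivity
  show ‖𝓕 M ξ‖ ≤ _ * (_ + momentSum N M ξ)
  calc ‖𝓕 M ξ‖
      ≤ (N + 2) * (2 * Real.pi * ‖ξ‖) ^ γ * (∫ x, ‖x‖ ^ γ * ‖M x‖) + C₂ * momentSum N M ξ :=
        norm_fourier_le hM.aestronglyMeasurable hNγ hN2 hmom hMγ ξ
    _ ≤ (N + 2) * (2 * Real.pi * ‖ξ‖) ^ γ * (A * r ^ (γ - (n : ℝ) * (1 / p - 1))) +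
          C₂ * momentSum N M ξ := by gcongr
    _ ≤ _ := by
        rw [Real.mul_rpow (by positivity) (norm_nonneg ξ)]
        have hC₁ : 0 ≤ (N + 2) * (2 * Real.pi) ^ γ * A := by positivity
        nlinarith [mul_nonneg hC₁ hS, mul_nonneg hC₂.le hX]

/-- Pointwise Fourier transform bound for a molecule centered at the origin:
`|M̂(ξ)| ≤ C(|ξ|^γ r^{γ - γ_p} + Σ_{|α| ≤ N} |ξ|^{|α|} |∫ M(x) x^α dx|)`. -/
theorem stmt15 (n : ℕ) (p s l γ : ℝ) (N : ℕ)
    (hp : 0 < p) (hp1 : p ≤ 1) (hs : 1 ≤ s) (hps : p < s)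
    (hl : (n : ℝ) * (s / p - 1) < l)
    (hγ1 : (n : ℝ) * (1 / p - 1) < γ) (hγ2 : γ < l / s - (n : ℝ) * (1 - 1 / s))
    (hN1 : (N : ℝ) < γ) (hN2 : γ ≤ (N : ℝ) + 1) :
    ∃ C : ℝ, 0 < C ∧
      ∀ (M : EuclideanSpace ℝ (Fin n) → ℂ) (r : ℝ), 0 < r → Measurable M →
        (∫⁻ x in ball (0 : EuclideanSpace ℝ (Fin n)) r, (‖M x‖₊ : ℝ≥0∞) ^ s) ^ (1 / s)
          ≤ ENNReal.ofReal (r ^ ((n : ℝ) * (1 / s - 1 / p))) →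
        (∫⁻ x in (ball (0 : EuclideanSpace ℝ (Fin n)) r)ᶜ,
            (‖M x‖₊ : ℝ≥0∞) ^ s * ENNReal.ofReal (‖x‖ ^ l)) ^ (1 / s)
          ≤ ENNReal.ofReal (r ^ (l / s + (n : ℝ) * (1 / s - 1 / p))) →
        ∀ ξ : EuclideanSpace ℝ (Fin n),
          ‖𝓕 M ξ‖ ≤ C *
            (‖ξ‖ ^ γ * r ^ (γ - (n : ℝ) * (1 / p - 1)) +
              ∑ α ∈ (Fintype.piFinset fun _ : Fin n => Finset.range (N + 1)) |>.filter
                  (fun α => ∑ i, α i ≤ N),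
                ‖ξ‖ ^ ((∑ i, (α i : ℝ))) *
                  ‖∫ x, M x * ((∏ i, x i ^ α i : ℝ) : ℂ)‖) :=
  stmt15_general n p s l γ N hs hγ2 hN1 hN2
end
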